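/- Let V be a finite-dimensional real vector space and L ⊆ 𝕋_ℂV a lagrangian subspace with L ∩ L̄ = 0. Let W ⊆ V be a subspace of codimension 1, with inclusion ι : W → V and complexified inclusion ι_ℂ, and let ι^!L := {X + ξ∘ι_ℂ : X ∈ W_ℂ, ξ ∈ (V_ℂ)*, X + ξ ∈ L} ⊆ 𝕋_ℂW. Then dim_ℂ(ι^!L ∩ conj(ι^!L)) = 1. -/

import Mathlib

open TensorProduct Module

noncomputable section

namespace CDirac


/-- The real generalized tangent space `V ⊕ V*`. -/
abbrev TR (V : Type*) [AddCommGroup V] [Module ℝ V] := V × (V →ₗ[ℝ] ℝ)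

variable {V : Type*} [AddCommGroup V] [Module ℝ V]

/-- The canonical pairing `⟨X+ξ, Y+η⟩ = (η X + ξ Y)/2` on `𝕋V`. -/
def pairR (a b : TR V) : ℝ := (b.2 a.1 + a.2 b.1) / 2

lemma pairR_add_left (a a' b : TR V) : pairR (a + a') b = pairR a b + pairR a' b := by
  simp only [pairR, Prod.fst_add, Prod.snd_add, map_add, LinearMap.add_apply]
  ring

lemma pairR_smul_left (c : ℝ) (a b : TR V) : pairR (c • a) b = c * pairR a b := by
  simp only [pairR, Prod.smul_fst, Prod.smul_snd, map_smul, LinearMap.smul_apply,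
    smul_eq_mul]
  ring

/-- Orthogonal complement with respect to the pairing on `𝕋V`. -/
def orthR (L : Submodule ℝ (TR V)) : Submodule ℝ (TR V) where
  carrier := {a | ∀ b ∈ L, pairR a b = 0}
  zero_mem' := fun b _ => by simp [pairR]
  add_mem' := fun {a a'} ha ha' b hb => by
    rw [pairR_add_left, ha b hb, ha' b hb, add_zero]
  smul_mem' := fun c a ha b hb => by rw [pairR_smul_left, ha b hb, mul_zero]

/-- A real lagrangian subspace: `L = L^⊥`. -/
def IsLagrangianR (L : Submodule ℝ (TR V)) : Prop := L = orthR L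

/-- An isotropic subspace of `𝕋V`. -/
def IsIsotropicR (K : Submodule ℝ (TR V)) : Prop := ∀ a ∈ K, ∀ b ∈ K, pairR a b = 0

/-- The quotient `K^⊥/K`. -/
abbrev quotK (K : Submodule ℝ (TR V)) :=
  @HasQuotient.Quotient _ _ (Submodule.hasQuotient (R := ℝ) (M := ↥(orthR K)))
    (K.comap (orthR K).subtype)

/-- The quotient map `K^⊥ → K^⊥/K`. -/
def mkK (K : Submodule ℝ (TR V)) : ↥(orthR K) →ₗ[ℝ] quotK K :=
  @Submodule.mkQ ℝ ↥(orthR K) _ (Submodule.addCommGroup _) (Submodule.module _)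
    (K.comap (orthR K).subtype)




/-- The complexification `V_ℂ = ℂ ⊗_ℝ V`. -/
abbrev Cx (V : Type*) [AddCommGroup V] [Module ℝ V] := ℂ ⊗[ℝ] V

/-- The complex dual `(V_ℂ)^*`. -/
abbrev DualC (V : Type*) [AddCommGroup V] [Module ℝ V] := Cx V →ₗ[ℂ] ℂ

/-- The complexified generalized tangent space `𝕋_ℂ V = V_ℂ ⊕ (V_ℂ)^*`. -/
abbrev TCx (V : Type*) [AddCommGroup V] [Module ℝ V] := Cx V × DualC V

/-- The ℂ-bilinear pairing on `𝕋_ℂ V`. -/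
def pairC (a b : TCx V) : ℂ := (b.2 a.1 + a.2 b.1) / 2

lemma pairC_add_left (a a' b : TCx V) : pairC (a + a') b = pairC a b + pairC a' b := by
  simp only [pairC, Prod.fst_add, Prod.snd_add, map_add, LinearMap.add_apply]
  ring

lemma pairC_smul_left (c : ℂ) (a b : TCx V) : pairC (c • a) b = c * pairC a b := by
  simp only [pairC, Prod.smul_fst, Prod.smul_snd, map_smul, LinearMap.smul_apply,
    smul_eq_mul]
  ring

/-- Orthogonal complement with respect to the ℂ-bilinear pairing on `𝕋_ℂ V`. -/
def orthC (L : Submodule ℂ (TCx V)) : Submodule ℂ (TCx V) where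
  carrier := {a | ∀ b ∈ L, pairC a b = 0}
  zero_mem' := fun b _ => by simp [pairC]
  add_mem' := fun {a a'} ha ha' b hb => by
    rw [pairC_add_left, ha b hb, ha' b hb, add_zero]
  smul_mem' := fun c a ha b hb => by rw [pairC_smul_left, ha b hb, mul_zero]

/-- A complex lagrangian subspace: `L = L^⊥`. -/
def IsLagrangianC (L : Submodule ℂ (TCx V)) : Prop := L = orthC L

private lemma conjCxAux_smul (z : ℂ) (x : Cx V) :
    TensorProduct.map Complex.conjAe.toLinearMap LinearMap.id (z • x) =
      starRingEnd ℂ z • TensorProduct.map Complex.conjAe.toLinearMap LinearMap.id x := by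
  induction x using TensorProduct.induction_on with
  | zero => simp
  | tmul w v => simp [smul_tmul', smul_eq_mul, Complex.conjAe_coe, map_mul]
  | add x y hx hy => simp only [smul_add, map_add, hx, hy]

/-- Conjugation on `V_ℂ`, as a `conj`-semilinear map. -/
def conjCx : Cx V →ₛₗ[starRingEnd ℂ] Cx V where
  toFun := TensorProduct.map Complex.conjAe.toLinearMap LinearMap.id
  map_add' := map_add _
  map_smul' := conjCxAux_smul

lemma conjCx_smul (z : ℂ) (x : Cx V) :
    conjCx (z • x) = starRingEnd ℂ z • conjCx x := conjCxAux_smul z x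

/-- Conjugation of a complex linear functional. -/
def conjDualFun (ξ : DualC V) : DualC V where
  toFun x := starRingEnd ℂ (ξ (conjCx x))
  map_add' x y := by simp
  map_smul' z x := by
    try dsimp only
    rw [conjCx_smul, map_smul, smul_eq_mul, map_mul, RingHom.id_apply]
    simp [smul_eq_mul]

/-- Conjugation on `(V_ℂ)^*`, as a `conj`-semilinear map. -/
def conjDual : DualC V →ₛₗ[starRingEnd ℂ] DualC V where
  toFun := conjDualFun
  map_add' ξ η := by ext x; simp [conjDualFun]
  map_smul' z ξ := by
    ext x
    simp [conjDualFun, smul_eq_mul, map_mul]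

/-- Conjugation on `𝕋_ℂ V`, as a `conj`-semilinear map. -/
def conjT : TCx V →ₛₗ[starRingEnd ℂ] TCx V where
  toFun a := (conjCx a.1, conjDual a.2)
  map_add' a b := by simp [Prod.ext_iff]
  map_smul' z a := by
    simp [Prod.ext_iff, Prod.smul_fst, Prod.smul_snd, map_smulₛₗ]

instance : RingHomSurjective (starRingEnd ℂ) :=
  ⟨fun z => ⟨starRingEnd ℂ z, by simp⟩⟩

/-- The conjugate `L̄` of a ℂ-subspace of `𝕋_ℂ V`. -/
def conjSub (L : Submodule ℂ (TCx V)) : Submodule ℂ (TCx V) := L.map conjT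

/-- The conjugate `Ē` of a ℂ-subspace of `V_ℂ`. -/
def conjE (E : Submodule ℂ (Cx V)) : Submodule ℂ (Cx V) := E.map conjCx

/-- The canonical inclusion `V → V_ℂ`, `v ↦ 1 ⊗ v`. -/
def iV : V →ₗ[ℝ] Cx V := TensorProduct.mk ℝ ℂ V 1





/-- ℝ-linear auxiliary version of the ℂ-linear extension of a real functional. -/
def dualExtAux (α : V →ₗ[ℝ] ℝ) : Cx V →ₗ[ℝ] ℂ :=
  TensorProduct.lift
    (LinearMap.mk₂ ℝ (fun z v => z * (α v : ℂ))
      (fun z w v => by push_cast; ring)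
      (fun r z v => by simp only [Complex.real_smul]; ring)
      (fun z v w => by push_cast [map_add]; ring)
      (fun r z v => by simp only [map_smul, smul_eq_mul, Complex.real_smul]; push_cast; ring))

private lemma dualExtAux_smulC (α : V →ₗ[ℝ] ℝ) (z : ℂ) (x : Cx V) :
    dualExtAux α (z • x) = z * dualExtAux α x := by
  induction x using TensorProduct.induction_on with
  | zero => simp
  | tmul w v =>
      simp only [dualExtAux, smul_tmul', lift.tmul, LinearMap.mk₂_apply, smul_eq_mul]
      ring
  | add x y hx hy => simp only [smul_add, map_add, hx, hy]; ring

/-- The ℂ-linear extension of a real functional `α : V → ℝ` to `V_ℂ`. -/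
def dualExtFun (α : V →ₗ[ℝ] ℝ) : DualC V where
  toFun := dualExtAux α
  map_add' := map_add _
  map_smul' z x := by simpa using dualExtAux_smulC α z x

private lemma dualExtFun_tmul (α : V →ₗ[ℝ] ℝ) (z : ℂ) (v : V) :
    dualExtFun α (z ⊗ₜ[ℝ] v) = z * (α v : ℂ) := by
  simp [dualExtFun, dualExtAux]

/-- The ℂ-linear extension map `V^* → (V_ℂ)^*`, as an ℝ-linear map. -/
def dualExt : (V →ₗ[ℝ] ℝ) →ₗ[ℝ] DualC V where
  toFun := dualExtFun
  map_add' α β := by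
    apply LinearMap.ext; intro x
    induction x using TensorProduct.induction_on with
    | zero => simp
    | tmul w v =>
        simp only [dualExtFun_tmul, LinearMap.add_apply]
        push_cast
        ring
    | add x y hx hy =>
        simp only [map_add, LinearMap.add_apply] at *
        rw [hx, hy]
  map_smul' r α := by
    apply LinearMap.ext; intro x
    induction x using TensorProduct.induction_on with
    | zero => simp
    | tmul w v =>
        simp only [dualExtFun_tmul, RingHom.id_apply, LinearMap.smul_apply,
          LinearMap.smul_apply, smul_eq_mul, Complex.real_smul]
        push_cast
        ring
    | add x y hx hy =>
        simp only [map_add, RingHom.id_apply, LinearMap.smul_apply, smul_eq_mul] at *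
        rw [hx, hy]

/-- The canonical inclusion `𝕋V → 𝕋_ℂV`. -/
def iT : TR V →ₗ[ℝ] TCx V where
  toFun a := (iV a.1, dualExt a.2)
  map_add' a b := by simp [Prod.ext_iff]
  map_smul' r a := by simp [Prod.ext_iff]



/-- Auxiliary ℝ-linear version of the ℂ-bilinear extension of a real bilinear form. -/
def bilinExtAux (B : V →ₗ[ℝ] V →ₗ[ℝ] ℝ) : Cx V →ₗ[ℝ] DualC V :=
  TensorProduct.lift
    (LinearMap.mk₂ ℝ (fun z v => z • dualExt (B v))
      (fun z w v => by simp only [add_smul])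
      (fun r z v => by simp only [smul_assoc])
      (fun z v w => by simp only [map_add, smul_add])
      (fun r z v => by simp only [map_smul]; exact smul_comm z r _))

private lemma bilinExtAux_smulC (B : V →ₗ[ℝ] V →ₗ[ℝ] ℝ) (z : ℂ) (x : Cx V) :
    bilinExtAux B (z • x) = z • bilinExtAux B x := by
  induction x using TensorProduct.induction_on with
  | zero => simp
  | tmul w v =>
      simp only [bilinExtAux, smul_tmul', lift.tmul, LinearMap.mk₂_apply, smul_eq_mul,
        mul_smul]
  | add x y hx hy => simp only [smul_add, map_add, hx, hy]

/-- The ℂ-bilinear extension of a real bilinear form `B : V × V → ℝ` to `V_ℂ`. -/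
def bilinExt (B : V →ₗ[ℝ] V →ₗ[ℝ] ℝ) : Cx V →ₗ[ℂ] DualC V where
  toFun := bilinExtAux B
  map_add' := map_add _
  map_smul' z x := by simpa using bilinExtAux_smulC B z x

/-- The `B`-transformation `e^B(X+ξ) = X + ξ + B̃(X,·)` of `𝕋_ℂV`, for a real `B`. -/
def eB (B : V →ₗ[ℝ] V →ₗ[ℝ] ℝ) : TCx V →ₗ[ℂ] TCx V where
  toFun a := (a.1, a.2 + bilinExt B a.1)
  map_add' a b := by
    simp only [Prod.fst_add, Prod.snd_add, map_add, Prod.mk_add_mk, Prod.mk.injEq]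
    exact ⟨trivial, by abel⟩
  map_smul' z a := by
    simp only [Prod.smul_fst, Prod.smul_snd, map_smul, RingHom.id_apply, Prod.smul_mk,
      Prod.mk.injEq, smul_add]

/-- The real `B`-transformation `e^B(X+α) = X + α + B(X,·)` of `𝕋V`. -/
def eBR (B : V →ₗ[ℝ] V →ₗ[ℝ] ℝ) : TR V →ₗ[ℝ] TR V where
  toFun a := (a.1, a.2 + B a.1)
  map_add' a b := by
    simp only [Prod.fst_add, Prod.snd_add, map_add, Prod.mk_add_mk, Prod.mk.injEq]
    exact ⟨trivial, by abel⟩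
  map_smul' r a := by
    simp only [Prod.smul_fst, Prod.smul_snd, map_smul, RingHom.id_apply, Prod.smul_mk,
      Prod.mk.injEq, smul_add]


/-- The range `E = pr_{V_ℂ}(L)` of a subspace of `𝕋_ℂV`. -/
def Esub (L : Submodule ℂ (TCx V)) : Submodule ℂ (Cx V) :=
  L.map (LinearMap.fst ℂ (Cx V) (DualC V))

/-- The real index `r = dim_ℂ (L ∩ L̄)`. -/
def riL (L : Submodule ℂ (TCx V)) : ℕ := finrank ℂ ↥(L ⊓ conjSub L)

/-- The real part `K = (L ∩ L̄) ∩ 𝕋V`, as a subspace of `𝕋V`. -/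
def Ksub (L : Submodule ℂ (TCx V)) : Submodule ℝ (TR V) :=
  ((L ⊓ conjSub L).restrictScalars ℝ).comap iT

/-- The distribution `D = (E + Ē) ∩ V`, as a subspace of `V`. -/
def Dsub (L : Submodule ℂ (TCx V)) : Submodule ℝ V :=
  ((Esub L ⊔ conjE (Esub L)).restrictScalars ℝ).comap iV

/-- The distribution `Δ = (E ∩ Ē) ∩ V`, as a subspace of `V`. -/
def DeltaSub (L : Submodule ℂ (TCx V)) : Submodule ℝ V :=
  ((Esub L ⊓ conjE (Esub L)).restrictScalars ℝ).comap iV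

/-- The order `s = dim V - dim D`. -/
def orderL (L : Submodule ℂ (TCx V)) : ℕ := finrank ℝ V - finrank ℝ ↥(Dsub L)

/-- The (normalized) type `k = dim_ℂ(E + Ē) - dim_ℂ E`. -/
def typeL (L : Submodule ℂ (TCx V)) : ℕ :=
  finrank ℂ ↥(Esub L ⊔ conjE (Esub L)) - finrank ℂ ↥(Esub L)


end CDirac

/-!
Since `L ⊕ L̄ = 𝕋_ℂV`, the real null covector `k = θ_ℂ` cutting out `W_ℂ` splits as
`k = a + ā` with `a ∈ L`. Isotropy of `L` and `L̄` forces `⟨a, k⟩ = 0`, i.e. the vector part of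
`a` lies in `W_ℂ`, so `a` descends to some `u ∈ ι^!L` with `ū = -u`, and `u ≠ 0` because `k ∉ L`.
Conversely, if `w` and `w̄` both lie in `ι^!L`, their lifts `b, b' ∈ L` satisfy `b̄ - b' ∈ ℂk`,
and `L ∩ L̄ = 0` then forces `b ∈ ℂa`. Hence `ι^!L ∩ conj(ι^!L) = ℂu`.
-/

namespace CDirac

variable {V : Type*} [AddCommGroup V] [Module ℝ V]

section Conjugation

lemma conjCx_tmul (z : ℂ) (v : V) : conjCx (z ⊗ₜ[ℝ] v) = starRingEnd ℂ z ⊗ₜ[ℝ] v := by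
  simp [conjCx, Complex.conjAe_coe]

lemma conjCx_conjCx (x : Cx V) : conjCx (conjCx x) = x := by
  induction x using TensorProduct.induction_on with
  | zero => simp
  | tmul z v => simp [conjCx_tmul]
  | add x y hx hy => rw [map_add, map_add, hx, hy]

lemma conjDual_apply (ξ : DualC V) (x : Cx V) :
    conjDual ξ x = starRingEnd ℂ (ξ (conjCx x)) := rfl

lemma conjDual_conjDual (ξ : DualC V) : conjDual (conjDual ξ) = ξ := by
  ext x
  simp [conjDual_apply, conjCx_conjCx]

lemma conjT_apply (a : TCx V) : conjT a = (conjCx a.1, conjDual a.2) := rfl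

lemma conjT_conjT (a : TCx V) : conjT (conjT a) = a := by
  simp [conjT_apply, conjCx_conjCx, conjDual_conjDual]

lemma mem_conjSub {L : Submodule ℂ (TCx V)} {x : TCx V} : x ∈ conjSub L ↔ conjT x ∈ L :=
  ⟨by rintro ⟨y, hy, rfl⟩; rwa [conjT_conjT], fun h => ⟨conjT x, h, conjT_conjT x⟩⟩

lemma conjDual_dualExt (α : V →ₗ[ℝ] ℝ) : conjDual (dualExt α) = dualExt α := by
  refine LinearMap.ext fun x => ?_
  induction x using TensorProduct.induction_on with
  | zero => simp
  | tmul z v => simp [conjDual_apply, conjCx_tmul, dualExt, dualExtFun, dualExtAux]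
  | add x y hx hy => simp only [map_add, hx, hy]

end Conjugation

section Pairing

lemma pairC_comm (a b : TCx V) : pairC a b = pairC b a := by
  simp only [pairC]; ring

lemma pairC_add_right (a b b' : TCx V) : pairC a (b + b') = pairC a b + pairC a b' := by
  rw [pairC_comm, pairC_add_left, pairC_comm b, pairC_comm b']

lemma pairC_conjT (a b : TCx V) : pairC (conjT a) (conjT b) = starRingEnd ℂ (pairC a b) := by
  simp [pairC, conjT_apply, conjDual_apply, conjCx_conjCx, map_div₀, map_ofNat]

def pairForm : LinearMap.BilinForm ℂ (TCx V) :=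
  LinearMap.mk₂ ℂ pairC pairC_add_left pairC_smul_left pairC_add_right
    fun c a b => by rw [pairC_comm, pairC_smul_left, pairC_comm, smul_eq_mul]

lemma pairForm_nondegenerate : (pairForm (V := V)).Nondegenerate := by
  have hrefl : (pairForm (V := V)).IsRefl := fun a b h => by
    simpa [pairForm, pairC_comm a b] using h
  refine hrefl.nondegenerate_iff_separatingLeft.mpr fun a ha => ?_
  have h₁ : a.1 = 0 := (Module.forall_dual_apply_eq_zero_iff ℂ a.1).mp fun φ => by
    simpa [pairForm, pairC] using ha (0, φ)
  have h₂ : a.2 = 0 := LinearMap.ext fun x => by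
    simpa [pairForm, pairC] using ha (x, 0)
  exact Prod.ext h₁ h₂

lemma orthC_eq_orthogonal (L : Submodule ℂ (TCx V)) : orthC L = pairForm.orthogonal L := by
  ext a
  simp only [LinearMap.BilinForm.mem_orthogonal_iff, pairForm,
    LinearMap.mk₂_apply, pairC_comm _ a]
  rfl

lemma IsLagrangianC.pairC_eq_zero {L : Submodule ℂ (TCx V)} (hL : IsLagrangianC L)
    {a b : TCx V} (ha : a ∈ L) (hb : b ∈ L) : pairC a b = 0 :=
  (hL ▸ ha : a ∈ orthC L) b hb

lemma isLagrangianC_conjSub {L : Submodule ℂ (TCx V)} (hL : IsLagrangianC L) :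
    IsLagrangianC (conjSub L) := by
  ext a
  refine ⟨fun ha b hb => ?_, fun ha => ?_⟩
  · simpa [pairC_conjT] using hL.pairC_eq_zero (mem_conjSub.mp ha) (mem_conjSub.mp hb)
  · rw [mem_conjSub, hL]
    intro b hb
    have h := congrArg (starRingEnd ℂ) (ha (conjT b) (mem_conjSub.mpr (by rwa [conjT_conjT])))
    rwa [← pairC_conjT, conjT_conjT, map_zero] at h

variable [FiniteDimensional ℝ V]

lemma IsLagrangianC.two_mul_finrank {L : Submodule ℂ (TCx V)} (hL : IsLagrangianC L) :
    2 * finrank ℂ L = finrank ℂ (TCx V) := by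
  have h := LinearMap.BilinForm.finrank_orthogonal pairForm_nondegenerate L
  rw [← orthC_eq_orthogonal, ← hL] at h
  have := Submodule.finrank_le L
  omega

lemma IsLagrangianC.sup_conjSub_eq_top {L : Submodule ℂ (TCx V)} (hL : IsLagrangianC L)
    (hreal : L ⊓ conjSub L = ⊥) : L ⊔ conjSub L = ⊤ := by
  apply Submodule.eq_top_of_finrank_eq
  have h := Submodule.finrank_sup_add_finrank_inf_eq L (conjSub L)
  rw [hreal, finrank_bot] at h
  have := hL.two_mul_finrank
  have := (isLagrangianC_conjSub hL).two_mul_finrank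
  omega

end Pairing

section RealDecomposition

variable {L : Submodule ℂ (TCx V)}

lemma exists_mem_eq_add_conjT [FiniteDimensional ℝ V] (hL : IsLagrangianC L)
    (hreal : L ⊓ conjSub L = ⊥) {k : TCx V} (hk : conjT k = k) : ∃ a ∈ L, k = a + conjT a := by
  obtain ⟨a, ha, y, hy, hay⟩ :=
    Submodule.mem_sup.mp (hL.sup_conjSub_eq_top hreal ▸ Submodule.mem_top : k ∈ L ⊔ conjSub L)
  set b := conjT y
  have hb : b ∈ L := mem_conjSub.mp hy
  have hconj : conjT (a - b) = a - b := by
    have := congrArg conjT hay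
    rw [hk, map_add] at this
    rw [map_sub, conjT_conjT]
    linear_combination (norm := module) this - hay
  have hab : a - b ∈ L ⊓ conjSub L :=
    ⟨sub_mem ha hb, mem_conjSub.mpr (by rw [hconj]; exact sub_mem ha hb)⟩
  rw [hreal, Submodule.mem_bot, sub_eq_zero] at hab
  exact ⟨a, ha, by rw [← hay, hab, conjT_conjT]⟩

lemma eq_smul_of_conjT_sub_smul_mem (hreal : L ⊓ conjSub L = ⊥) {a b k : TCx V} {c : ℂ}
    (ha : a ∈ L) (hb : b ∈ L) (hk : k = a + conjT a) (hbk : conjT b - c • k ∈ L) :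
    b = starRingEnd ℂ c • a := by
  have hconj : conjT (b - starRingEnd ℂ c • a) = (conjT b - c • k) + c • a := by
    rw [map_sub, map_smulₛₗ, Complex.conj_conj, hk]
    module
  have hd : b - starRingEnd ℂ c • a ∈ L ⊓ conjSub L :=
    ⟨sub_mem hb (L.smul_mem _ ha), mem_conjSub.mpr (hconj ▸ add_mem hbk (L.smul_mem _ ha))⟩
  rwa [hreal, Submodule.mem_bot, sub_eq_zero] at hd

/-- `k` is null and `a`, `ā` are isotropic, so `0 = ⟨k, k⟩ = 2⟨a, ā⟩ = 2⟨a, k⟩`. -/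
lemma IsLagrangianC.pairC_eq_zero_of_eq_add_conjT (hL : IsLagrangianC L) {a k : TCx V}
    (ha : a ∈ L) (hk : k = a + conjT a) (hkk : pairC k k = 0) : pairC a k = 0 := by
  have haa : pairC a a = 0 := hL.pairC_eq_zero ha ha
  have hσσ : pairC (conjT a) (conjT a) = 0 := by rw [pairC_conjT, haa, map_zero]
  have hak : pairC a k = pairC a (conjT a) := by rw [hk, pairC_add_right, haa, zero_add]
  rw [hk, pairC_add_left, ← hk, hak, hk, pairC_add_right, pairC_comm (conjT a) a, hσσ] at hkk
  rw [hak]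
  linear_combination hkk / 2

end RealDecomposition

section Restriction

variable (W : Submodule ℝ V)

lemma baseChange_subtype_injective : Function.Injective (W.subtype.baseChange ℂ) :=
  Module.Flat.lTensor_preserves_injective_linearMap W.subtype W.injective_subtype

lemma conjCx_baseChange_subtype (x : Cx W) :
    conjCx (W.subtype.baseChange ℂ x) = W.subtype.baseChange ℂ (conjCx x) := by
  induction x using TensorProduct.induction_on with
  | zero => simp
  | tmul z w => simp [conjCx_tmul]
  | add x y hx hy => simp only [map_add, hx, hy]

lemma exists_conjDual_eq_self_ker_eq_range [FiniteDimensional ℝ V]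
    (hW : finrank ℝ V = finrank ℝ W + 1) :
    ∃ θ : DualC V, conjDual θ = θ ∧ θ ≠ 0 ∧
      LinearMap.ker θ = LinearMap.range (W.subtype.baseChange ℂ) := by
  obtain ⟨e⟩ : Nonempty ((V ⧸ W) ≃ₗ[ℝ] ℝ) := by
    refine FiniteDimensional.nonempty_linearEquiv_of_finrank_eq ?_
    have := W.finrank_quotient_add_finrank
    rw [finrank_self]
    omega
  set θ₀ : V →ₗ[ℝ] ℝ := e.toLinearMap ∘ₗ W.mkQ
  have hsurj : Function.Surjective θ₀ := e.surjective.comp W.mkQ_surjective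
  have hexact : Function.Exact (W.subtype.lTensor ℂ) (θ₀.lTensor ℂ) :=
    lTensor_exact ℂ ((LinearMap.exact_subtype_mkQ W).comp_injective _ e.injective (map_zero e))
      hsurj
  have hθ₀ (x : Cx V) : dualExt θ₀ x = TensorProduct.rid ℝ ℂ (θ₀.lTensor ℂ x) := by
    induction x using TensorProduct.induction_on with
    | zero => simp
    | tmul z v => simp [dualExt, dualExtFun, dualExtAux, mul_comm]
    | add x y hx hy => simp only [map_add, hx, hy]
  obtain ⟨v, hv⟩ := hsurj 1
  refine ⟨dualExt θ₀, conjDual_dualExt θ₀, fun h => ?_, ?_⟩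
  · simpa [hθ₀, hv] using LinearMap.congr_fun h (1 ⊗ₜ v)
  · ext x
    rw [LinearMap.mem_ker, hθ₀, LinearEquiv.map_eq_zero_iff, hexact, LinearMap.mem_range,
      LinearMap.baseChange_eq_ltensor, Set.mem_range]

/-- `W_ℂ × (V_ℂ)^*` stands for the elements `X + ξ` of `𝕋_ℂV` with `X ∈ W_ℂ`. -/
def liftT : Cx W × DualC V →ₗ[ℂ] TCx V := (W.subtype.baseChange ℂ).prodMap LinearMap.id

def restrictT : Cx W × DualC V →ₗ[ℂ] TCx W :=
  LinearMap.id.prodMap (W.subtype.baseChange ℂ).dualMap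

def backwardImage (L : Submodule ℂ (TCx V)) : Submodule ℂ (TCx W) :=
  (L.comap (liftT W)).map (restrictT W)

lemma coe_backwardImage (L : Submodule ℂ (TCx V)) :
    (backwardImage W L : Set (TCx W)) =
      {a | ∃ (X : Cx W) (ξ : DualC V), a = (X, ξ.comp (W.subtype.baseChange ℂ)) ∧
        (W.subtype.baseChange ℂ X, ξ) ∈ L} := by
  ext a
  simp only [backwardImage, Submodule.map_coe, Set.mem_image, SetLike.mem_coe,
    Submodule.mem_comap, Prod.exists, Set.mem_ofPred_eq]
  exact exists₂_congr fun X ξ => by rw [and_comm, eq_comm]; rfl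

def conjPair (p : Cx W × DualC V) : Cx W × DualC V := (conjCx p.1, conjDual p.2)

lemma liftT_conjPair (p : Cx W × DualC V) : liftT W (conjPair W p) = conjT (liftT W p) :=
  Prod.ext (conjCx_baseChange_subtype W p.1).symm rfl

lemma restrictT_conjPair (p : Cx W × DualC V) :
    restrictT W (conjPair W p) = conjT (restrictT W p) :=
  Prod.ext rfl <| LinearMap.ext fun x => by
    simp [restrictT, conjPair, conjT_apply, conjDual_apply, conjCx_baseChange_subtype]

lemma liftT_injective : Function.Injective (liftT W) :=
  (baseChange_subtype_injective W).prodMap Function.injective_id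

variable {W} {θ : DualC V} (hθ : LinearMap.ker θ = LinearMap.range (W.subtype.baseChange ℂ))
include hθ

lemma restrictT_eq_zero_iff {p : Cx W × DualC V} :
    restrictT W p = 0 ↔ ∃ c : ℂ, p = c • ((0 : Cx W), θ) := by
  obtain ⟨X, ξ⟩ := p
  have hθj : θ.comp (W.subtype.baseChange ℂ) = 0 := LinearMap.range_le_ker_iff.mp hθ.ge
  simp only [restrictT, LinearMap.prodMap_apply, LinearMap.id_apply, Prod.mk_eq_zero,
    Prod.smul_mk, smul_zero, Prod.mk.injEq]
  constructor
  · rintro ⟨rfl, hξ⟩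
    have hle : LinearMap.ker θ ≤ LinearMap.ker ξ := hθ ▸ LinearMap.range_le_ker_iff.mpr hξ
    have := mem_span_of_iInf_ker_le_ker (L := fun _ : Unit => θ) (by simpa using hle)
    obtain ⟨c, hc⟩ := Submodule.mem_span_singleton.mp (by simpa using this)
    exact ⟨c, rfl, hc.symm⟩
  · rintro ⟨c, rfl, rfl⟩
    exact ⟨rfl, by simp [LinearMap.dualMap_apply', hθj]⟩

lemma exists_liftT_eq {a : TCx V} (ha : θ a.1 = 0) : ∃ p, liftT W p = a := by
  obtain ⟨X, hX⟩ := (hθ ▸ ha : a.1 ∈ LinearMap.range (W.subtype.baseChange ℂ))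
  exact ⟨(X, a.2), Prod.ext hX rfl⟩

end Restriction

section BackwardImage

variable {W : Submodule ℝ V} {θ : DualC V}
  (hθ : LinearMap.ker θ = LinearMap.range (W.subtype.baseChange ℂ))
  {L : Submodule ℂ (TCx V)} {p : Cx W × DualC V} (hp : liftT W p ∈ L)
  (hk : liftT W (0, θ) = liftT W p + conjT (liftT W p))
include hθ hk

lemma conjT_restrictT_eq_neg : conjT (restrictT W p) = -restrictT W p := by
  have hconj : conjPair W p = ((0 : Cx W), θ) - p :=
    liftT_injective W (by rw [liftT_conjPair, map_sub, hk, add_sub_cancel_left])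
  rw [← restrictT_conjPair, hconj, map_sub,
    (restrictT_eq_zero_iff hθ).mpr ⟨1, (one_smul _ _).symm⟩, zero_sub]

include hp

lemma restrictT_mem_inf_conjSub :
    restrictT W p ∈ backwardImage W L ⊓ conjSub (backwardImage W L) := by
  have hmem : restrictT W p ∈ backwardImage W L := Submodule.mem_map_of_mem hp
  exact ⟨hmem, mem_conjSub.mpr (by rw [conjT_restrictT_eq_neg hθ hk]; exact neg_mem hmem)⟩

lemma restrictT_ne_zero (hreal : L ⊓ conjSub L = ⊥) (hθ₀ : θ ≠ 0) : restrictT W p ≠ 0 := by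
  intro h
  obtain ⟨c, rfl⟩ := (restrictT_eq_zero_iff hθ).mp h
  set k := liftT W ((0 : Cx W), θ)
  have hk0 : k ≠ 0 := fun h0 => hθ₀ (congrArg Prod.snd h0)
  have hc : c ≠ 0 := by
    rintro rfl
    exact hk0 (by rw [hk, zero_smul, map_zero, map_zero, add_zero])
  have hkL : k ∈ L := by
    have : k = c⁻¹ • liftT W (c • ((0 : Cx W), θ)) := by
      rw [map_smul, smul_smul, inv_mul_cancel₀ hc, one_smul]
    exact this ▸ L.smul_mem c⁻¹ hp
  have hkreal : conjT k = k := by rw [hk, map_add, conjT_conjT, add_comm]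
  have : k ∈ L ⊓ conjSub L := ⟨hkL, mem_conjSub.mpr (by rwa [hkreal])⟩
  rw [hreal, Submodule.mem_bot] at this
  exact hk0 this

lemma inf_conjSub_le_span (hreal : L ⊓ conjSub L = ⊥) :
    backwardImage W L ⊓ conjSub (backwardImage W L) ≤ Submodule.span ℂ {restrictT W p} := by
  rintro w ⟨⟨q, hq, rfl⟩, hw⟩
  obtain ⟨q', hq', hq'w⟩ := mem_conjSub.mp hw
  obtain ⟨c, hc⟩ := (restrictT_eq_zero_iff hθ).mp
    (show restrictT W (conjPair W q - q') = 0 by rw [map_sub, restrictT_conjPair, hq'w, sub_self])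
  have hlift : conjT (liftT W q) - c • liftT W ((0 : Cx W), θ) = liftT W q' := by
    rw [← liftT_conjPair, ← map_smul, ← map_sub, ← hc, sub_sub_cancel]
  have hq_eq : q = starRingEnd ℂ c • p := liftT_injective W <| by
    rw [map_smul]
    exact eq_smul_of_conjT_sub_smul_mem hreal hp hq hk (hlift ▸ hq')
  exact Submodule.mem_span_singleton.mpr ⟨starRingEnd ℂ c, by rw [hq_eq, map_smul]⟩

end BackwardImage

end CDirac

open CDirac Module

/-- If `L ⊆ 𝕋_ℂV` is lagrangian with `L ∩ L̄ = 0` and `W ⊆ V` has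
codimension `1`, then the backward image `ι^!L` under the inclusion `ι : W → V`
satisfies `dim_ℂ(ι^!L ∩ conj(ι^!L)) = 1`. -/
theorem stmt3 (V : Type*) [AddCommGroup V] [Module ℝ V] [FiniteDimensional ℝ V]
    (L : Submodule ℂ (TCx V)) (hL : IsLagrangianC L) (hreal : L ⊓ conjSub L = ⊥)
    (W : Submodule ℝ V) (hW : finrank ℝ V = finrank ℝ ↥W + 1)
    (L' : Submodule ℂ (TCx ↥W))
    (hL' : (L' : Set (TCx ↥W)) =
      {a : TCx ↥W | ∃ (X : Cx ↥W) (ξ : DualC V),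
        a = (X, ξ.comp (LinearMap.baseChange ℂ W.subtype)) ∧
        ((LinearMap.baseChange ℂ W.subtype) X, ξ) ∈ L}) :
    finrank ℂ ↥(L' ⊓ conjSub L') = 1 := by
  obtain ⟨θ, hθreal, hθ₀, hθ⟩ := exists_conjDual_eq_self_ker_eq_range W hW
  obtain rfl : L' = backwardImage W L :=
    SetLike.coe_injective (hL'.trans (coe_backwardImage W L).symm)
  set k : TCx V := liftT W ((0 : Cx W), θ)
  have hkreal : conjT k = k := Prod.ext (by simp [k, liftT, conjT_apply]) hθreal
  obtain ⟨a, haL, hk⟩ := exists_mem_eq_add_conjT hL hreal hkreal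
  have hak : pairC a k = 0 :=
    hL.pairC_eq_zero_of_eq_add_conjT haL hk (by simp [k, pairC, liftT])
  obtain ⟨p, rfl⟩ := exists_liftT_eq hθ (a := a) (by simpa [k, pairC, liftT] using hak)
  have hspan : backwardImage W L ⊓ conjSub (backwardImage W L) = ℂ ∙ restrictT W p :=
    le_antisymm (inf_conjSub_le_span hθ haL hk hreal)
      ((Submodule.span_singleton_le_iff_mem _ _).mpr (restrictT_mem_inf_conjSub hθ haL hk))
  rw [hspan, finrank_span_singleton (restrictT_ne_zero hθ haL hk hreal hθ₀)]
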